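/- arXiv:1503.02277 — 7 statements merged into one kernel-verified Lean document; each statement's English description precedes it below -/
import Mathlib

section
/- Let I be a set and 𝓕 a set of filters on I. A topological space X is 𝓕c-Frolík (i.e., X × Y is sequencewise 𝓕-compact for every sequencewise 𝓕-compact space Y) if and only if X is sequencewise (𝓕 ∩ 𝓖)-compact for every 𝓖 ∈ Spec_I(𝓕c), where 𝓕c is the class of sequencewise 𝓕-compact spaces. -/
universe u

open Filter Topology

/-- A space `X` is sequencewise `𝓕`-compact if every `I`-indexed sequence in `X`
`F`-converges (to some point) for some `F ∈ 𝓕`. -/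
def SeqFCompact {I : Type u} (𝓕 : Set (Filter I)) (X : Type u) [TopologicalSpace X] : Prop :=
  ∀ x : I → X, ∃ F ∈ 𝓕, ∃ p : X, Filter.Tendsto x F (𝓝 p)

/-- The spectrum of a sequence `y : I → Y`: the set of filters on `I` along which `y`
converges to some point of `Y`. -/
def spec {I : Type u} {Y : Type u} [TopologicalSpace Y] (y : I → Y) : Set (Filter I) :=
  {F | ∃ p : Y, Filter.Tendsto y F (𝓝 p)}

/-- The spectrum of a class `H` of topological spaces, relative to the index set `I`. -/
def specI (I : Type u) (H : ∀ Y : Type u, TopologicalSpace Y → Prop) : Set (Set (Filter I)) :=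
  {𝓖 | ∃ (Y : Type u) (tY : TopologicalSpace Y) (y : I → Y), H Y tY ∧ 𝓖 = @spec I Y tY y}

/-- A sequence in `X × Y` converges along `F` iff both of its coordinates do. -/
theorem seqFCompact_prod_iff {I : Type u} (𝓕 : Set (Filter I)) (X Y : Type u)
    [TopologicalSpace X] [TopologicalSpace Y] :
    SeqFCompact 𝓕 (X × Y) ↔ ∀ y : I → Y, SeqFCompact (𝓕 ∩ spec y) X := by
  constructor
  · intro h y x
    obtain ⟨F, hF, ⟨p, q⟩, hxy⟩ := h fun i => (x i, y i)
    rw [nhds_prod_eq, tendsto_prod_iff'] at hxy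
    exact ⟨F, ⟨hF, q, hxy.2⟩, p, hxy.1⟩
  · intro h z
    obtain ⟨F, ⟨hF, q, hq⟩, p, hp⟩ := h (Prod.snd ∘ z) (Prod.fst ∘ z)
    exact ⟨F, hF, (p, q), hp.prodMk_nhds hq⟩

/-- A space `X` is `𝓕c`-Frolík iff it is sequencewise `𝓕 ∩ 𝓖`-compact for every
`𝓖 ∈ Spec_I(𝓕c)`, where `𝓕c` is the class of sequencewise `𝓕`-compact spaces. -/
theorem frolik_seqFCompact_iff {I : Type u} (𝓕 : Set (Filter I))
    (X : Type u) [TopologicalSpace X] :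
    (∀ (Y : Type u) [TopologicalSpace Y], SeqFCompact 𝓕 Y → SeqFCompact 𝓕 (X × Y)) ↔
      (∀ 𝓖 ∈ specI I (fun Y tY => @SeqFCompact I 𝓕 Y tY), SeqFCompact (𝓕 ∩ 𝓖) X) := by
  simp only [seqFCompact_prod_iff]
  constructor
  · rintro h 𝓖 ⟨Y, tY, y, hY, rfl⟩
    exact h Y hY y
  · intro h Y tY hY y
    exact h _ ⟨Y, tY, y, hY, rfl⟩
end

section
/- There exists a family 𝐐 = {𝓠_b : b ∈ B}, where each 𝓠_b is a family of filters over some set, such that a topological space X is productively Lindelöf (i.e., X × Y is Lindelöf for every Lindelöf space Y) if and only if X is 𝐐-compact, i.e., X is sequencewise 𝓠_b-compact for every b ∈ B. Moreover 𝐐 can be chosen so that every 𝓠_b consists of ultrafilters. -/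
/-!
Say `f : Z → X` reflects ultrafilter convergence if every ultrafilter on `Z` whose image
under `f` converges is itself convergent. Such a map pulls the Lindelöf property back, and
`f × id_Y` again reflects ultrafilter convergence, so productive Lindelöfness pulls back too.
Take `B` to be the spaces `Z` (of the given universe) that are not productively Lindelöf and
`𝓠_Z` the non-convergent ultrafilters on `Z`. A sequence `f : Z → X` fails to
`𝓠_Z`-converge exactly when `f` reflects ultrafilter convergence; this cannot happen for
productively Lindelöf `X`, while for `X` not productively Lindelöf the identity of `X` is such
a sequence.
-/

universe u

open Filter Topology

open Set

section

variable {Z W : Type*} [TopologicalSpace Z] [TopologicalSpace W]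

def ReflectsUltrafilterConvergence (f : Z → W) : Prop :=
  ∀ (U : Ultrafilter Z) (w : W), Tendsto f U (𝓝 w) → ∃ z, (U : Filter Z) ≤ 𝓝 z

theorem reflectsUltrafilterConvergence_id : ReflectsUltrafilterConvergence (id : Z → Z) :=
  fun _ w hw => ⟨w, hw⟩

namespace ReflectsUltrafilterConvergence

variable {f : Z → W}

theorem exists_mem_nhds_preimage_subset_finite_union (hf : ReflectsUltrafilterConvergence f)
    {ι : Type*} {G : ι → Set Z} (hG : ∀ i, IsOpen (G i)) (hcov : ⋃ i, G i = univ) (w : W) :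
    ∃ N ∈ 𝓝 w, ∃ T : Set ι, T.Finite ∧ f ⁻¹' N ⊆ ⋃ i ∈ T, G i := by
  -- Otherwise some ultrafilter along which `f` tends to `w` avoids every `G i`,
  -- yet it converges to a point of `Z`, which lies in some `G i`.
  by_contra! h
  have hne : NeBot (comap f (𝓝 w) ⊓ ⨅ i, 𝓟 (G i)ᶜ) := by
    refine (((𝓝 w).basis_sets.comap f).inf (hasBasis_iInf_principal_finite _)).neBot_iff.2 ?_
    rintro ⟨N, T⟩ ⟨hN, hT⟩
    obtain ⟨z, hzN, hzT⟩ := not_subset.1 (h N hN T hT)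
    exact ⟨z, hzN, by simpa using hzT⟩
  let U := Ultrafilter.of (comap f (𝓝 w) ⊓ ⨅ i, 𝓟 (G i)ᶜ)
  have hU : (U : Filter Z) ≤ _ := Ultrafilter.of_le _
  obtain ⟨z, hz⟩ := hf U w (tendsto_iff_comap.2 (hU.trans inf_le_left))
  obtain ⟨i, hi⟩ := mem_iUnion.1 (hcov ▸ mem_univ z)
  have hGi_compl : (G i)ᶜ ∈ U := hU.trans inf_le_right (mem_iInf_of_mem i (mem_principal_self _))
  exact Ultrafilter.compl_notMem_iff.2 (hz ((hG i).mem_nhds hi)) hGi_compl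

theorem lindelofSpace [LindelofSpace W] (hf : ReflectsUltrafilterConvergence f) :
    LindelofSpace Z := by
  refine isLindelof_univ_iff.1 (isLindelof_iff_countable_subcover.2 fun G hG hcov => ?_)
  choose N hN T hT hsub using
    hf.exists_mem_nhds_preimage_subset_finite_union hG (univ_subset_iff.1 hcov)
  obtain ⟨s, hs, hsN⟩ := LindelofSpace.elim_nhds_subcover N hN
  refine ⟨⋃ w ∈ s, T w, hs.biUnion fun w _ => (hT w).countable, fun z _ => ?_⟩
  obtain ⟨w, hws, hzw⟩ := mem_iUnion₂.1 (hsN ▸ mem_univ (f z))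
  obtain ⟨i, hiT, hzi⟩ := mem_iUnion₂.1 (hsub w hzw)
  exact mem_biUnion (mem_biUnion hws hiT) hzi

theorem prodMap_id {Y : Type*} [TopologicalSpace Y] (hf : ReflectsUltrafilterConvergence f) :
    ReflectsUltrafilterConvergence (Prod.map f (id : Y → Y)) := by
  rintro U ⟨w, y⟩ hU
  rw [nhds_prod_eq, tendsto_prod_iff'] at hU
  obtain ⟨z, hz⟩ := hf (U.map Prod.fst) w hU.1
  refine ⟨(z, y), ?_⟩
  rw [nhds_prod_eq]
  exact le_prod.2 ⟨hz, hU.2⟩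

end ReflectsUltrafilterConvergence

end

def ProductivelyLindelof (X : Type u) [TopologicalSpace X] : Prop :=
  ∀ (Y : Type u) [TopologicalSpace Y], LindelofSpace Y → LindelofSpace (X × Y)

theorem ReflectsUltrafilterConvergence.productivelyLindelof {Z X : Type u} [TopologicalSpace Z]
    [TopologicalSpace X] {f : Z → X} (hf : ReflectsUltrafilterConvergence f)
    (hX : ProductivelyLindelof X) : ProductivelyLindelof Z := by
  intro Y _ hY
  have := hX Y hY
  exact hf.prodMap_id.lindelofSpace

def nonconvergentUltrafilters (Z : Type*) [TopologicalSpace Z] : Set (Filter Z) :=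
  {F | ∃ U : Ultrafilter Z, F = U ∧ ∀ z, ¬ (U : Filter Z) ≤ 𝓝 z}

theorem seqFCompact_nonconvergentUltrafilters_iff {Z X : Type u} [TopologicalSpace Z]
    [TopologicalSpace X] :
    SeqFCompact (nonconvergentUltrafilters Z) X ↔
      ∀ f : Z → X, ¬ ReflectsUltrafilterConvergence f := by
  refine ⟨fun h f hf => ?_, fun h f => ?_⟩
  · obtain ⟨-, ⟨U, rfl, hU⟩, w, hw⟩ := h f
    obtain ⟨z, hz⟩ := hf U w hw
    exact hU z hz
  · simp only [ReflectsUltrafilterConvergence, not_forall, not_exists] at h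
    obtain ⟨U, w, hw, hU⟩ := h f
    exact ⟨U, ⟨U, rfl, hU⟩, w, hw⟩

/-- There is a family `𝐐 = {𝓠_b : b ∈ B}` of families of ultrafilters such that a space
`X` is productively Lindelöf iff `X` is `𝐐`-compact. -/
theorem exists_Q_productively_lindelof :
    ∃ (B : Type (u + 1)) (J : B → Type u) (𝓠 : ∀ b : B, Set (Filter (J b))),
      (∀ b : B, ∀ F ∈ 𝓠 b, ∃ U : Ultrafilter (J b), F = ↑U) ∧
      ∀ (X : Type u) [TopologicalSpace X],
        (∀ (Y : Type u) [TopologicalSpace Y], LindelofSpace Y → LindelofSpace (X × Y)) ↔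
          (∀ b : B, SeqFCompact (𝓠 b) X) := by
  refine ⟨Σ Z : Type u, {τ : TopologicalSpace Z // ¬ @ProductivelyLindelof Z τ}, fun b => b.1,
    fun b => @nonconvergentUltrafilters b.1 b.2.1, ?_, fun X _ => ⟨?_, ?_⟩⟩
  · rintro b F ⟨U, rfl, -⟩
    exact ⟨U, rfl⟩
  · rintro hX ⟨Z, τ, hZ⟩
    exact seqFCompact_nonconvergentUltrafilters_iff.2 fun f hf => hZ (hf.productivelyLindelof hX)
  · intro h
    by_contra hX
    exact seqFCompact_nonconvergentUltrafilters_iff.1 (h ⟨X, _, hX⟩) id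
      reflectsUltrafilterConvergence_id
end

section
/- There exists a family 𝐐 = {𝓠_b : b ∈ B}, where each 𝓠_b is a family of filters over some set, such that a topological space X is productively linearly Lindelöf (i.e., X × Y is linearly Lindelöf for every linearly Lindelöf space Y) if and only if X is 𝐐-compact, i.e., X is sequencewise 𝓠_b-compact for every b ∈ B. Moreover 𝐐 can be chosen so that every 𝓠_b consists of ultrafilters. -/
universe u

open Filter Topology

/-- `X` is `[λ, λ]`-compact: every open cover of `X` by at most `λ` sets has a subcover
by fewer than `λ` sets. -/
def LamCompact (lam : Cardinal.{u}) (X : Type u) [TopologicalSpace X] : Prop :=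
  ∀ S : Set (Set X), (∀ s ∈ S, IsOpen s) → ⋃₀ S = Set.univ → Cardinal.mk S ≤ lam →
    ∃ T ⊆ S, Cardinal.mk T < lam ∧ ⋃₀ T = Set.univ

/-- `X` is linearly Lindelöf: `[λ, λ]`-compact for every regular uncountable cardinal. -/
def LinearlyLindelof (X : Type u) [TopologicalSpace X] : Prop :=
  ∀ lam : Cardinal.{u}, lam.IsRegular → Cardinal.aleph0 < lam → LamCompact lam X

/-!
For a regular cardinal `λ`, a space `W` is `[λ, λ]`-compact iff every `λ`-sequence in `W` has a
cluster point along the filter of tails of `λ`, i.e. converges along some ultrafilter on `λ`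
extending the tails (these are exactly the uniform ultrafilters on `λ`). So we index `𝐐` by the
`λ`-sequences `y` in linearly Lindelöf spaces `Y`, `λ` regular and uncountable, and let `𝓠_y`
consist of the uniform ultrafilters along which `y` converges. A `λ`-sequence `(x, y)` in
`X × Y` converges along `D` iff both `x` and `y` do, so `X × Y` is `[λ, λ]`-compact for all such
`Y` and `λ` exactly when `X` is `𝓠_y`-compact for all such `y`.
-/

open Cardinal Set

section LamCompact

variable {lam : Cardinal.{u}} {W : Type u} [TopologicalSpace W]

theorem Cardinal.IsRegular.exists_forall_lt_of_mk_lt (hreg : lam.IsRegular)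
    {A : Set lam.ord.ToType} (hA : #A < lam) : ∃ b, ∀ a ∈ A, a < b :=
  not_isCofinal_iff.1 fun h =>
    (Order.cof_le h).not_gt (by rwa [Ordinal.cof_toType, hreg.cof_ord])

theorem Cardinal.IsRegular.mk_Iic_lt (hreg : lam.IsRegular) (b : lam.ord.ToType) :
    #(Iic b) < lam := by
  rw [← Iio_insert]
  refine mk_insert_le.trans_lt
    (add_lt_of_lt hreg.aleph0_le ?_ (one_lt_aleph0.trans_le hreg.aleph0_le))
  simpa using mk_Iio_lt b

theorem LamCompact.exists_mapClusterPt (hreg : lam.IsRegular) (hW : LamCompact lam W)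
    (w : lam.ord.ToType → W) : ∃ p, MapClusterPt p atTop w := by
  have : Nonempty lam.ord.ToType := Ordinal.nonempty_toType_iff.2 hreg.ord_pos.ne'
  simp_rw [mapClusterPt_atTop_iff_forall_mem_closure]
  by_contra! hno
  set tail : lam.ord.ToType → Set W := fun β => (closure (w '' Ici β))ᶜ
  obtain ⟨T, hT, hTcard, hTcover⟩ := hW (range tail)
    (forall_mem_range.2 fun _ => isClosed_closure.isOpen_compl)
    (by rw [sUnion_range]; exact iUnion_eq_univ_iff.2 hno)
    (mk_range_le.trans_eq (mk_ord_toType lam))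
  obtain ⟨A, rfl, hinj⟩ := exists_image_eq_injOn_of_subset_range hT
  obtain ⟨γ, hγ⟩ :=
    hreg.exists_forall_lt_of_mk_lt (by rwa [mk_image_eq_of_injOn _ _ hinj] at hTcard)
  obtain ⟨_, ⟨β, hβ, rfl⟩, hwγ⟩ := hTcover.symm ▸ mem_univ (w γ)
  exact hwγ (subset_closure ⟨γ, (hγ β hβ).le, rfl⟩)

theorem lamCompact_of_forall_exists_mapClusterPt (hreg : lam.IsRegular)
    (h : ∀ w : lam.ord.ToType → W, ∃ p, MapClusterPt p atTop w) : LamCompact lam W := by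
  intro S hSopen hScover hScard
  by_contra! hno
  obtain ⟨f, hf⟩ : ∃ f : S → lam.ord.ToType, Function.Injective f := by
    rw [← mk_ord_toType lam, Cardinal.le_def] at hScard
    exact ⟨_, hScard.some.injective⟩
  have hescape : ∀ β, ∃ x : W, ∀ s : S, f s ≤ β → x ∉ (s : Set W) := by
    intro β
    have hsmall : #(Subtype.val '' (f ⁻¹' Iic β)) < lam :=
      mk_image_le.trans_lt ((mk_preimage_of_injective f _ hf).trans_lt (hreg.mk_Iic_lt β))
    obtain ⟨x, hx⟩ :=
      (ne_univ_iff_exists_notMem _).1 (hno _ (Subtype.coe_image_subset _ _) hsmall)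
    exact ⟨x, fun s hs hxs => hx ⟨s, ⟨s, hs, rfl⟩, hxs⟩⟩
  choose w hw using hescape
  obtain ⟨p, hp⟩ := h w
  obtain ⟨s, hs, hps⟩ := hScover.symm ▸ mem_univ p
  obtain ⟨β, hβ, hws⟩ := (mapClusterPt_iff_frequently.1 hp s
    ((hSopen s hs).mem_nhds hps)).forall_exists_of_atTop (f ⟨s, hs⟩)
  exact hw β ⟨s, hs⟩ hβ hws

theorem lamCompact_iff_forall_exists_ultrafilter_tendsto (hreg : lam.IsRegular) :
    LamCompact lam W ↔ ∀ w : lam.ord.ToType → W,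
      ∃ D : Ultrafilter lam.ord.ToType,
        (D : Filter lam.ord.ToType) ≤ atTop ∧ ∃ p, Tendsto w ↑D (𝓝 p) := by
  refine ⟨fun hW w => ?_, fun h => lamCompact_of_forall_exists_mapClusterPt hreg fun w => ?_⟩
  · obtain ⟨p, hp⟩ := hW.exists_mapClusterPt hreg w
    obtain ⟨D, hD, hDp⟩ := mapClusterPt_iff_ultrafilter.1 hp
    exact ⟨D, hD, p, hDp⟩
  · obtain ⟨D, hD, p, hDp⟩ := h w
    exact ⟨p, mapClusterPt_iff_ultrafilter.2 ⟨D, hD, hDp⟩⟩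

end LamCompact

structure LinearlyLindelofSeq : Type (u + 1) where
  lam : Cardinal.{u}
  isRegular : lam.IsRegular
  aleph0_lt : ℵ₀ < lam
  Y : Type u
  [topology : TopologicalSpace Y]
  linearlyLindelof : LinearlyLindelof Y
  seq : lam.ord.ToType → Y

attribute [instance] LinearlyLindelofSeq.topology

def LinearlyLindelofSeq.limitUltrafilters (b : LinearlyLindelofSeq.{u}) :
    Set (Filter b.lam.ord.ToType) :=
  {F | ∃ D : Ultrafilter b.lam.ord.ToType,
    F = ↑D ∧ (D : Filter b.lam.ord.ToType) ≤ atTop ∧ ∃ q, Tendsto b.seq ↑D (𝓝 q)}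

/-- There is a family `𝐐 = {𝓠_b : b ∈ B}` of families of ultrafilters such that a space
`X` is productively linearly Lindelöf iff `X` is `𝐐`-compact. -/
theorem exists_Q_productively_linearlyLindelof :
    ∃ (B : Type (u + 1)) (J : B → Type u) (𝓠 : ∀ b : B, Set (Filter (J b))),
      (∀ b : B, ∀ F ∈ 𝓠 b, ∃ U : Ultrafilter (J b), F = ↑U) ∧
      ∀ (X : Type u) [TopologicalSpace X],
        (∀ (Y : Type u) [TopologicalSpace Y],
            LinearlyLindelof Y → LinearlyLindelof (X × Y)) ↔
          (∀ b : B, SeqFCompact (𝓠 b) X) := by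
  refine ⟨LinearlyLindelofSeq.{u}, fun b => b.lam.ord.ToType,
    LinearlyLindelofSeq.limitUltrafilters, fun b F ⟨D, hF, _⟩ => ⟨D, hF⟩,
    fun X _ => ⟨fun hX b x => ?_, fun hX Y _ hY lam hreg hlam => ?_⟩⟩
  · have hXY := hX b.Y b.linearlyLindelof b.lam b.isRegular b.aleph0_lt
    obtain ⟨D, hD, ⟨p, q⟩, hpq⟩ :=
      (lamCompact_iff_forall_exists_ultrafilter_tendsto b.isRegular).1 hXY
        fun i => (x i, b.seq i)
    rw [nhds_prod_eq, tendsto_prod_iff'] at hpq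
    exact ⟨D, ⟨D, rfl, hD, q, hpq.2⟩, p, hpq.1⟩
  · refine (lamCompact_iff_forall_exists_ultrafilter_tendsto hreg).2 fun w => ?_
    obtain ⟨_, ⟨D, rfl, hD, q, hq⟩, p, hp⟩ :=
      hX ⟨lam, hreg, hlam, Y, hY, fun i => (w i).2⟩ fun i => (w i).1
    exact ⟨D, hD, (p, q), by rw [nhds_prod_eq]; exact hp.prodMk hq⟩
end

section
/- A topological space X is Lindelöf if and only if X is [λ, λ]-compact for every uncountable cardinal λ, i.e., if and only if for every uncountable cardinal λ, every open cover of X by at most λ sets has a subcover by fewer than λ sets. -/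
universe u

/-!
A countable subcover has fewer than `λ` members for every uncountable `λ`, which gives one
direction. Conversely, `[λ, λ]`-compactness for `λ = #S` replaces an uncountable cover `S` by a
subcover of strictly smaller cardinality; since cardinals are well-ordered, iterating this
reaches a countable subcover.
-/

open Set
open scoped Cardinal

section

variable {X : Type u} [TopologicalSpace X]

theorem lindelofSpace_iff_countable_sUnion_subcover :
    LindelofSpace X ↔ ∀ S : Set (Set X), (∀ s ∈ S, IsOpen s) → ⋃₀ S = univ →
      ∃ T ⊆ S, T.Countable ∧ ⋃₀ T = univ := by
  refine ⟨fun _ S hSo hS ↦ ?_, fun h ↦ ⟨isLindelof_of_countable_subcover fun U hUo hU ↦ ?_⟩⟩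
  · obtain ⟨T, hTS, hT, hTcov⟩ := isLindelof_univ.elim_countable_subcover_image (c := id) hSo
      (by rw [← hS]; exact sUnion_eq_biUnion.subset)
    exact ⟨T, hTS, hT, univ_subset_iff.mp (by rwa [sUnion_eq_biUnion])⟩
  · obtain ⟨T, hTU, hT, hTcov⟩ := h (range U) (forall_mem_range.mpr hUo)
      (univ_subset_iff.mp (by rwa [sUnion_range]))
    choose idx hidx using fun s : T ↦ hTU s.2
    have : Countable T := hT.to_subtype
    refine ⟨range idx, countable_range idx, fun x _ ↦ ?_⟩
    obtain ⟨s, hsT, hxs⟩ := mem_sUnion.mp (hTcov ▸ mem_univ x)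
    exact mem_biUnion (mem_range_self ⟨s, hsT⟩) ((hidx ⟨s, hsT⟩).symm ▸ hxs)

theorem LamCompact.of_lindelofSpace [LindelofSpace X] {lam : Cardinal.{u}} (hlam : ℵ₀ < lam) :
    LamCompact lam X := fun S hSo hS _ ↦ by
  obtain ⟨T, hTS, hT, hTcov⟩ := lindelofSpace_iff_countable_sUnion_subcover.mp ‹_› S hSo hS
  exact ⟨T, hTS, hT.le_aleph0.trans_lt hlam, hTcov⟩

theorem exists_countable_sUnion_subcover_of_lamCompact
    (h : ∀ lam : Cardinal.{u}, ℵ₀ < lam → LamCompact lam X) {S : Set (Set X)}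
    (hSo : ∀ s ∈ S, IsOpen s) (hS : ⋃₀ S = univ) : ∃ T ⊆ S, T.Countable ∧ ⋃₀ T = univ := by
  induction hκ : #S using WellFoundedLT.induction generalizing S with
  | ind κ IH =>
    rcases le_or_gt #S ℵ₀ with hcount | hunc
    · exact ⟨S, subset_rfl, Cardinal.le_aleph0_iff_set_countable.mp hcount, hS⟩
    · obtain ⟨T, hTS, hTS_lt, hT⟩ := h #S hunc S hSo hS le_rfl
      obtain ⟨T', hT'T, hT', hT'cov⟩ :=
        IH #T (hκ ▸ hTS_lt) (fun s hs ↦ hSo s (hTS hs)) hT rfl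
      exact ⟨T', hT'T.trans hTS, hT', hT'cov⟩

end

/-- A space is Lindelöf iff it is `[λ, λ]`-compact for every uncountable cardinal `λ`. -/
theorem lindelof_iff_lamCompact (X : Type u) [TopologicalSpace X] :
    LindelofSpace X ↔
      ∀ lam : Cardinal.{u}, Cardinal.aleph0 < lam → LamCompact lam X :=
  ⟨fun _ _ ↦ LamCompact.of_lindelofSpace, fun h ↦ lindelofSpace_iff_countable_sUnion_subcover.mpr
    fun _ ↦ exists_countable_sUnion_subcover_of_lamCompact h⟩
end

section
/- Let I be a set, 𝓕 a set of filters on I, and 𝓗 a class of topological spaces. A topological space X is 𝓕p-Frolík for 𝓗-spaces (i.e., X × Y is sequencewise 𝓕-pseudocompact for every Y ∈ 𝓗) if and only if X is sequencewise (𝓕 ∩ 𝓖)-pseudocompact for every 𝓖 ∈ PSpec_I(𝓗). -/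
universe u

open Filter Topology

/-- `p` is an `F`-limit point of the sequence of sets `O : I → Set X`. -/
def FLimitPt {I : Type u} {X : Type u} [TopologicalSpace X] (F : Filter I)
    (O : I → Set X) (p : X) : Prop :=
  ∀ U ∈ 𝓝 p, {i : I | (O i ∩ U).Nonempty} ∈ F

/-- A space `X` is sequencewise `𝓕`-pseudocompact if every `I`-indexed sequence of
nonempty open subsets of `X` has an `F`-limit point for some `F ∈ 𝓕`. -/
def SeqFPseudocompact {I : Type u} (𝓕 : Set (Filter I)) (X : Type u)
    [TopologicalSpace X] : Prop :=
  ∀ O : I → Set X, (∀ i, IsOpen (O i)) → (∀ i, (O i).Nonempty) →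
    ∃ F ∈ 𝓕, ∃ p : X, FLimitPt F O p

/-- The pseudospectrum of a sequence of sets `O : I → Set Y`. -/
def pspec {I : Type u} {Y : Type u} [TopologicalSpace Y] (O : I → Set Y) : Set (Filter I) :=
  {F | ∃ p : Y, FLimitPt F O p}

/-- The pseudospectrum of a class `H` of topological spaces, relative to `I`. -/
def pspecI (I : Type u) (H : ∀ Y : Type u, TopologicalSpace Y → Prop) :
    Set (Set (Filter I)) :=
  {𝓖 | ∃ (Y : Type u) (tY : TopologicalSpace Y) (O : I → Set Y),
    H Y tY ∧ (∀ i, @IsOpen Y tY (O i)) ∧ (∀ i, (O i).Nonempty) ∧ 𝓖 = @pspec I Y tY O}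

/- Every nonempty open subset of `X × Y` contains a nonempty open box `U ×ˢ V`, and a box
sequence `(U i ×ˢ V i)` has `(p, q)` as an `F`-limit point exactly when `p` is an `F`-limit
point of `U` and `q` one of `V`, i.e. when `F ∈ pspec V` and `p` is an `F`-limit point of `U`. -/

namespace FLimitPt

variable {I X Y : Type u} [TopologicalSpace X] [TopologicalSpace Y] {F : Filter I}

theorem image {O : I → Set X} {p : X} (hp : FLimitPt F O p) {f : X → Y} (hf : Continuous f) :
    FLimitPt F (fun i => f '' O i) (f p) := by
  intro W hW
  filter_upwards [hp _ (hf.continuousAt hW)] with i ⟨x, hxO, hxW⟩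
  exact ⟨f x, Set.mem_image_of_mem f hxO, hxW⟩

theorem prod {U : I → Set X} {V : I → Set Y} {p : X} {q : Y} (hp : FLimitPt F U p)
    (hq : FLimitPt F V q) : FLimitPt F (fun i => U i ×ˢ V i) (p, q) := by
  intro W hW
  obtain ⟨A, hA, B, hB, hAB⟩ := mem_nhds_prod_iff.1 hW
  filter_upwards [hp A hA, hq B hB] with i ⟨x, hxU, hxA⟩ ⟨y, hyV, hyB⟩
  exact ⟨(x, y), ⟨hxU, hyV⟩, hAB ⟨hxA, hyB⟩⟩

theorem fst_of_prod {U : I → Set X} {V : I → Set Y} {z : X × Y} (hV : ∀ i, (V i).Nonempty)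
    (hz : FLimitPt F (fun i => U i ×ˢ V i) z) : FLimitPt F U z.1 := by
  simpa only [Set.fst_image_prod _ (hV _)] using hz.image continuous_fst

theorem snd_of_prod {U : I → Set X} {V : I → Set Y} {z : X × Y} (hU : ∀ i, (U i).Nonempty)
    (hz : FLimitPt F (fun i => U i ×ˢ V i) z) : FLimitPt F V z.2 := by
  simpa only [Set.snd_image_prod (hU _)] using hz.image continuous_snd

end FLimitPt

theorem exists_isOpen_nonempty_prod_subset {X Y : Type*} [TopologicalSpace X]
    [TopologicalSpace Y] {O : Set (X × Y)} (hO : IsOpen O) (hne : O.Nonempty) :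
    ∃ U : Set X, ∃ V : Set Y, IsOpen U ∧ IsOpen V ∧ U.Nonempty ∧ V.Nonempty ∧ U ×ˢ V ⊆ O := by
  obtain ⟨⟨x, y⟩, hxy⟩ := hne
  obtain ⟨U, V, hU, hV, hx, hy, hUV⟩ := isOpen_prod_iff.1 hO x y hxy
  exact ⟨U, V, hU, hV, ⟨x, hx⟩, ⟨y, hy⟩, hUV⟩

namespace SeqFPseudocompact

variable {I X Y : Type u} [TopologicalSpace X] [TopologicalSpace Y] {𝓕 : Set (Filter I)}

theorem inter_pspec_of_prod (h : SeqFPseudocompact 𝓕 (X × Y)) {V : I → Set Y}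
    (hVo : ∀ i, IsOpen (V i)) (hVne : ∀ i, (V i).Nonempty) :
    SeqFPseudocompact (𝓕 ∩ pspec V) X := by
  intro U hUo hUne
  obtain ⟨F, hF, z, hz⟩ := h (fun i => U i ×ˢ V i) (fun i => (hUo i).prod (hVo i))
    (fun i => (hUne i).prod (hVne i))
  exact ⟨F, ⟨hF, z.2, hz.snd_of_prod hUne⟩, z.1, hz.fst_of_prod hVne⟩

theorem prod_of_inter_pspec
    (h : ∀ V : I → Set Y, (∀ i, IsOpen (V i)) → (∀ i, (V i).Nonempty) →
      SeqFPseudocompact (𝓕 ∩ pspec V) X) :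
    SeqFPseudocompact 𝓕 (X × Y) := by
  intro O hOo hOne
  choose U V hUo hVo hUne hVne hUV using
    fun i => exists_isOpen_nonempty_prod_subset (hOo i) (hOne i)
  obtain ⟨F, ⟨hF, q, hq⟩, p, hp⟩ := h V hVo hVne U hUo hUne
  exact ⟨F, hF, (p, q), fun W hW =>
    mem_of_superset ((hp.prod hq) W hW) fun i ⟨z, hzUV, hzW⟩ => ⟨z, hUV i hzUV, hzW⟩⟩

end SeqFPseudocompact

/-- A space `X` is `𝓕p`-Frolík for `𝓗`-spaces iff it is sequencewise
`𝓕 ∩ 𝓖`-pseudocompact for every `𝓖 ∈ PSpec_I(𝓗)`. -/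
theorem frolik_for_class_seqFPseudocompact_iff {I : Type u} (𝓕 : Set (Filter I))
    (H : ∀ Y : Type u, TopologicalSpace Y → Prop) (X : Type u) [TopologicalSpace X] :
    (∀ (Y : Type u) (tY : TopologicalSpace Y), H Y tY → SeqFPseudocompact 𝓕 (X × Y)) ↔
      (∀ 𝓖 ∈ pspecI I H, SeqFPseudocompact (𝓕 ∩ 𝓖) X) := by
  constructor
  · rintro h 𝓖 ⟨Y, tY, V, hH, hVo, hVne, rfl⟩
    exact (h Y tY hH).inter_pspec_of_prod hVo hVne
  · intro h Y tY hH
    exact SeqFPseudocompact.prod_of_inter_pspec fun V hVo hVne =>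
      h _ ⟨Y, tY, V, hH, hVo, hVne, rfl⟩
end

section
/- Let K be a class of topological spaces closed under homeomorphisms (if X ∈ K and Y is homeomorphic to X then Y ∈ K). Then 𝔉(𝔉(K)) = 𝔉(K), where 𝔉 is the Frolík operator relative to the topological product. -/
universe u

/-- The Frolík class of a class `K` of topological spaces, relative to the topological
product: `𝔉(K) = {X : X × Y ∈ K for every Y ∈ K}`. -/
def topFrolik (K : ∀ X : Type u, TopologicalSpace X → Prop) :
    ∀ X : Type u, TopologicalSpace X → Prop :=
  fun X tX => ∀ (Y : Type u) (tY : TopologicalSpace Y), K Y tY →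
    K (X × Y) (@instTopologicalSpaceProd X Y tX tY)

/-!
The one-point space lies in `𝔉(K)` because `1 × Y ≅ Y`; testing `X ∈ 𝔉(𝔉(K))` against it
gives `X × 1 × Z ∈ K`, i.e. `X × Z ∈ K`, for every `Z ∈ K`. Conversely, if `X ∈ 𝔉(K)`,
`Y ∈ 𝔉(K)` and `Z ∈ K`, then `X × (Y × Z) ∈ K`, hence `(X × Y) × Z ∈ K` by associativity.
-/

namespace topFrolik

def HomeomorphInvariant (K : ∀ X : Type u, TopologicalSpace X → Prop) : Prop :=
  ∀ (X Y : Type u) (tX : TopologicalSpace X) (tY : TopologicalSpace Y),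
    K X tX → Nonempty (@Homeomorph X Y tX tY) → K Y tY

variable {K : ∀ X : Type u, TopologicalSpace X → Prop}

theorem punit_mem (hK : HomeomorphInvariant K) : topFrolik K PUnit ⊥ :=
  fun Y _ hY => hK Y _ _ _ hY ⟨(Homeomorph.punitProd Y).symm⟩

theorem of_topFrolik_topFrolik (hK : HomeomorphInvariant K) {X : Type u} [tX : TopologicalSpace X]
    (hX : topFrolik (topFrolik K) X tX) : topFrolik K X tX := fun Z _ hZ =>
  hK _ _ _ _ (hX PUnit ⊥ (punit_mem hK) Z _ hZ)
    ⟨(Homeomorph.prodPUnit X).prodCongr (Homeomorph.refl Z)⟩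

theorem topFrolik_of_topFrolik (hK : HomeomorphInvariant K) {X : Type u} [tX : TopologicalSpace X]
    (hX : topFrolik K X tX) : topFrolik (topFrolik K) X tX := fun Y _ hY Z _ hZ =>
  hK _ _ _ _ (hX (Y × Z) _ (hY Z _ hZ)) ⟨(Homeomorph.prodAssoc X Y Z).symm⟩

end topFrolik

/-- If `K` is closed under homeomorphisms, then `𝔉(𝔉(K)) = 𝔉(K)`. -/
theorem topFrolik_idem (K : ∀ X : Type u, TopologicalSpace X → Prop)
    (hK : ∀ (X Y : Type u) (tX : TopologicalSpace X) (tY : TopologicalSpace Y),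
      K X tX → Nonempty (@Homeomorph X Y tX tY) → K Y tY) :
    topFrolik (topFrolik K) = topFrolik K := by
  funext X tX
  exact propext ⟨topFrolik.of_topFrolik_topFrolik hK, topFrolik.topFrolik_of_topFrolik hK⟩
end

section
/- Let C be the class of all topological spaces with at least two points, with the Frolík operator 𝔉 taken relative to C and the topological product, and let K = {X ∈ C : |X| ∈ {2, 2^5} ∪ {2^{9+2h} : h ∈ ℕ}}. Then 𝔉(K) = {X ∈ C : |X| ∈ {2^4} ∪ {2^{8+2h} : h ∈ ℕ}}, 𝔉(𝔉(K)) = {X ∈ C : |X| ∈ {2^{4+2h} : h ∈ ℕ}}, and 𝔉(𝔉(𝔉(K))) = {X ∈ C : |X| ∈ {2^{2+2h} : h ∈ ℕ}}; in particular the inclusions 𝔉(K) ⊂ 𝔉(𝔉(K)) ⊂ 𝔉(𝔉(𝔉(K))) are strict. -/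
/-!
Every class in sight is determined by cardinality alone, so topology plays no role. If `K`
consists of the spaces with cardinality in `S`, then `𝔉(K)` consists of the spaces of
cardinality `c > 1` with `c * d ∈ S` for every `d ∈ S` with `d > 1`. For `S = {2 ^ e : e ∈ E}`
an equation `c * 2 ^ e = 2 ^ m` forces `c` to be finite and a power of two, so `𝔉` acts on
exponent sets as `E ↦ {k > 0 : k + E ⊆ E}`. Starting from `{1, 5, 9, 11, …}` this yields
`{4, 8, 10, …}`, then `{4, 6, 8, …}`, then `{2, 4, 6, …}`.
-/
universe u

/-- The Frolík class relative to the class `C` of spaces with at least two points: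
`𝔉(K) = {X ∈ C : X × Y ∈ K for every Y ∈ K}`. -/
def frolikC (K : ∀ X : Type u, TopologicalSpace X → Prop) :
    ∀ X : Type u, TopologicalSpace X → Prop :=
  fun X tX => Nontrivial X ∧ ∀ (Y : Type u) (tY : TopologicalSpace Y), K Y tY →
    K (X × Y) (@instTopologicalSpaceProd X Y tX tY)

/-- The class `K ⊆ C` of spaces whose cardinality lies in `{2, 2^5} ∪ {2^(9+2h) : h ∈ ℕ}`. -/
def K16 : ∀ X : Type u, TopologicalSpace X → Prop :=
  fun X _ => Nontrivial X ∧
    Cardinal.mk X ∈ ({2, 2 ^ (5 : ℕ)} ∪ {c | ∃ h : ℕ, c = 2 ^ (9 + 2 * h)} :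
      Set Cardinal.{u})

open Cardinal

def cardClass (S : Set Cardinal.{u}) : ∀ X : Type u, TopologicalSpace X → Prop :=
  fun X _ => Nontrivial X ∧ #X ∈ S

lemma cardClass_congr {S T : Set Cardinal.{u}} (h : ∀ c, 1 < c → (c ∈ S ↔ c ∈ T)) :
    cardClass S = cardClass T := by
  funext X tX
  exact propext (and_congr_right fun hX => h _ (one_lt_iff_nontrivial.mpr hX))

lemma cardClass_mono {S T : Set Cardinal.{u}} (h : S ⊆ T) {X : Type u}
    {tX : TopologicalSpace X} (hX : cardClass S X tX) : cardClass T X tX :=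
  ⟨hX.1, h hX.2⟩

lemma cardClass_out_iff (S : Set Cardinal.{u}) (c : Cardinal.{u}) (t : TopologicalSpace c.out) :
    cardClass S c.out t ↔ 1 < c ∧ c ∈ S := by
  rw [cardClass, ← one_lt_iff_nontrivial, mk_out]

def frolikCard (S : Set Cardinal.{u}) : Set Cardinal.{u} :=
  {c | ∀ d ∈ S, 1 < d → c * d ∈ S}

theorem frolikC_cardClass (S : Set Cardinal.{u}) :
    frolikC (cardClass S) = cardClass (frolikCard S) := by
  funext X tX
  refine propext (and_congr_right fun hX => ⟨fun h d hdS hd => ?_, fun h Y tY hY => ?_⟩)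
  · have hout : cardClass S d.out ⊥ := (cardClass_out_iff S d ⊥).mpr ⟨hd, hdS⟩
    simpa [mk_prod] using (h d.out ⊥ hout).2
  · obtain ⟨hYnt, hYS⟩ := hY
    exact ⟨inferInstance, by simpa [mk_prod] using h _ hYS (one_lt_iff_nontrivial.mpr hYnt)⟩

lemma two_pow_injective : Function.Injective (2 ^ · : ℕ → Cardinal.{u}) := by
  intro m n h
  have : ((2 ^ m : ℕ) : Cardinal.{u}) = ((2 ^ n : ℕ) : Cardinal.{u}) := by simpa using h
  exact Nat.pow_right_injective le_rfl (Nat.cast_injective this)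

lemma exists_eq_two_pow_of_mul_two_pow_eq {c : Cardinal.{u}} {e m : ℕ}
    (h : c * 2 ^ e = 2 ^ m) : ∃ k : ℕ, c = 2 ^ k := by
  have hfin : c < ℵ₀ := by
    have hle : c ≤ 2 ^ m := h ▸ le_mul_of_one_le_right zero_le (one_le_pow₀ one_le_two)
    exact hle.trans_lt (by simpa using natCast_lt_aleph0 (n := 2 ^ m))
  obtain ⟨n, rfl⟩ := lt_aleph0.mp hfin
  have hnat : n * 2 ^ e = 2 ^ m := by exact_mod_cast h
  obtain ⟨k, -, rfl⟩ := (Nat.dvd_prime_pow Nat.prime_two).mp (Dvd.intro _ hnat)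
  exact ⟨k, by push_cast; rfl⟩

def frolikExponents (E : Set ℕ) : Set ℕ :=
  {k | k ≠ 0 ∧ ∀ e ∈ E, k + e ∈ E}

theorem frolikC_cardClass_two_pow {E : Set ℕ} (hE : 0 ∉ E) {e₀ : ℕ} (he₀ : e₀ ∈ E) :
    frolikC (cardClass ((2 ^ · : ℕ → Cardinal.{u}) '' E)) =
      cardClass ((2 ^ · : ℕ → Cardinal.{u}) '' frolikExponents E) := by
  rw [frolikC_cardClass]
  refine cardClass_congr fun c hc => ⟨fun h => ?_, ?_⟩
  · obtain ⟨m, -, hm⟩ :=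
      h _ ⟨e₀, he₀, rfl⟩ (one_lt_pow₀ one_lt_two (ne_of_mem_of_not_mem he₀ hE))
    obtain ⟨k, rfl⟩ := exists_eq_two_pow_of_mul_two_pow_eq hm.symm
    refine ⟨k, ⟨?_, fun e he => ?_⟩, rfl⟩
    · rintro rfl
      exact hc.ne' (pow_zero 2)
    obtain ⟨m, hm, hkm⟩ :=
      h _ ⟨e, he, rfl⟩ (one_lt_pow₀ one_lt_two (ne_of_mem_of_not_mem he hE))
    rw [← pow_add, two_pow_injective.eq_iff] at hkm
    exact hkm ▸ hm
  · rintro ⟨k, hk, rfl⟩ _ ⟨e, he, rfl⟩ -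
    exact ⟨k + e, hk.2 e he, pow_add 2 k e⟩

lemma cardClass_two_pow_out_iff {E : Set ℕ} {n : ℕ} (hn : n ≠ 0)
    (t : TopologicalSpace (2 ^ n : Cardinal.{u}).out) :
    cardClass ((2 ^ · : ℕ → Cardinal.{u}) '' E) (2 ^ n : Cardinal.{u}).out t ↔ n ∈ E := by
  rw [cardClass_out_iff, two_pow_injective.mem_set_image]
  exact and_iff_right (one_lt_pow₀ one_lt_two hn)

lemma cardClass_two_pow_ssubset {E F : Set ℕ} (hEF : E ⊆ F) {n : ℕ} (hn : n ≠ 0)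
    (hnF : n ∈ F) (hnE : n ∉ E) :
    (∀ (X : Type u) (tX : TopologicalSpace X),
        cardClass ((2 ^ · : ℕ → Cardinal.{u}) '' E) X tX →
          cardClass ((2 ^ · : ℕ → Cardinal.{u}) '' F) X tX) ∧
      ∃ (X : Type u) (tX : TopologicalSpace X),
        cardClass ((2 ^ · : ℕ → Cardinal.{u}) '' F) X tX ∧
          ¬ cardClass ((2 ^ · : ℕ → Cardinal.{u}) '' E) X tX :=
  ⟨fun _ _ => cardClass_mono (Set.image_mono hEF), _, ⊥,
    (cardClass_two_pow_out_iff hn ⊥).mpr hnF, mt (cardClass_two_pow_out_iff hn ⊥).mp hnE⟩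

def parityFrom (a : ℕ) : Set ℕ :=
  {e | a ≤ e ∧ e % 2 = a % 2}

lemma image_two_pow_parityFrom (a : ℕ) :
    (2 ^ · : ℕ → Cardinal.{u}) '' parityFrom a = {c | ∃ h : ℕ, c = 2 ^ (a + 2 * h)} := by
  ext c
  constructor
  · rintro ⟨e, ⟨hae, hpar⟩, rfl⟩
    exact ⟨(e - a) / 2, by congr 1; omega⟩
  · rintro ⟨h, rfl⟩
    exact ⟨a + 2 * h, ⟨by omega, by omega⟩, rfl⟩

lemma K16_eq_cardClass : K16.{u} =
    cardClass ((2 ^ · : ℕ → Cardinal.{u}) '' insert 1 (insert 5 (parityFrom 9))) := by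
  rw [Set.image_insert_eq, Set.image_insert_eq, image_two_pow_parityFrom, pow_one]
  unfold K16 cardClass
  simp only [Set.insert_union, Set.singleton_union]

lemma frolikExponents_one_five_parityFrom_nine :
    frolikExponents (insert 1 (insert 5 (parityFrom 9))) = insert 4 (parityFrom 8) := by
  ext k
  simp only [frolikExponents, parityFrom, Set.mem_insert_iff, Set.mem_ofPred_eq]
  refine ⟨fun h => ?_, fun hk => ⟨by omega, fun e he => by omega⟩⟩
  have h1 := h.2 1 (by omega)
  have h5 := h.2 5 (by omega)
  have h9 := h.2 9 (by omega)
  omega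

lemma frolikExponents_insert_four_parityFrom_eight :
    frolikExponents (insert 4 (parityFrom 8)) = parityFrom 4 := by
  ext k
  simp only [frolikExponents, parityFrom, Set.mem_insert_iff, Set.mem_ofPred_eq]
  refine ⟨fun h => ?_, fun hk => ⟨by omega, fun e he => by omega⟩⟩
  have h4 := h.2 4 (by omega)
  omega

lemma frolikExponents_parityFrom_four : frolikExponents (parityFrom 4) = parityFrom 2 := by
  ext k
  simp only [frolikExponents, parityFrom, Set.mem_ofPred_eq]
  refine ⟨fun h => ?_, fun hk => ⟨by omega, fun e he => by omega⟩⟩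
  have h4 := h.2 4 (by omega)
  omega

/-- Relative to the class of spaces with at least two points:
`𝔉(K16)`, `𝔉(𝔉(K16))` and `𝔉(𝔉(𝔉(K16)))` consist exactly of the spaces of cardinality
in `{2^4} ∪ {2^(8+2h)}`, `{2^(4+2h)}` and `{2^(2+2h)}` respectively; in particular the
inclusions `𝔉(K16) ⊂ 𝔉(𝔉(K16)) ⊂ 𝔉(𝔉(𝔉(K16)))` are strict. -/
theorem frolikC_K16 :
    (∀ (X : Type u) (tX : TopologicalSpace X),
      frolikC K16 X tX ↔ (Nontrivial X ∧
        Cardinal.mk X ∈ ({2 ^ (4 : ℕ)} ∪ {c | ∃ h : ℕ, c = 2 ^ (8 + 2 * h)} :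
          Set Cardinal.{u}))) ∧
    (∀ (X : Type u) (tX : TopologicalSpace X),
      frolikC (frolikC K16) X tX ↔ (Nontrivial X ∧
        Cardinal.mk X ∈ ({c | ∃ h : ℕ, c = 2 ^ (4 + 2 * h)} : Set Cardinal.{u}))) ∧
    (∀ (X : Type u) (tX : TopologicalSpace X),
      frolikC (frolikC (frolikC K16)) X tX ↔ (Nontrivial X ∧
        Cardinal.mk X ∈ ({c | ∃ h : ℕ, c = 2 ^ (2 + 2 * h)} : Set Cardinal.{u}))) ∧
    ((∀ (X : Type u) (tX : TopologicalSpace X),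
        frolikC K16 X tX → frolikC (frolikC K16) X tX) ∧
      ∃ (X : Type u) (tX : TopologicalSpace X),
        frolikC (frolikC K16) X tX ∧ ¬ frolikC K16 X tX) ∧
    ((∀ (X : Type u) (tX : TopologicalSpace X),
        frolikC (frolikC K16) X tX → frolikC (frolikC (frolikC K16)) X tX) ∧
      ∃ (X : Type u) (tX : TopologicalSpace X),
        frolikC (frolikC (frolikC K16)) X tX ∧ ¬ frolikC (frolikC K16) X tX) := by
  have h₁ : frolikC K16.{u} =
      cardClass ((2 ^ · : ℕ → Cardinal.{u}) '' insert 4 (parityFrom 8)) := by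
    rw [K16_eq_cardClass, frolikC_cardClass_two_pow (by simp [parityFrom]) (Set.mem_insert 1 _),
      frolikExponents_one_five_parityFrom_nine]
  have h₂ : frolikC (frolikC K16.{u}) =
      cardClass ((2 ^ · : ℕ → Cardinal.{u}) '' parityFrom 4) := by
    rw [h₁, frolikC_cardClass_two_pow (by simp [parityFrom]) (Set.mem_insert 4 _),
      frolikExponents_insert_four_parityFrom_eight]
  have h₃ : frolikC (frolikC (frolikC K16.{u})) =
      cardClass ((2 ^ · : ℕ → Cardinal.{u}) '' parityFrom 2) := by
    rw [h₂, frolikC_cardClass_two_pow (e₀ := 4) (by simp [parityFrom]) (by simp [parityFrom]),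
      frolikExponents_parityFrom_four]
  refine ⟨fun X tX => ?_, fun X tX => ?_, fun X tX => ?_, ?_, ?_⟩
  · rw [h₁, Set.image_insert_eq, image_two_pow_parityFrom, Set.insert_eq]; rfl
  · rw [h₂, image_two_pow_parityFrom]; rfl
  · rw [h₃, image_two_pow_parityFrom]; rfl
  · rw [h₂, h₁]
    refine cardClass_two_pow_ssubset (n := 6) ?_ (by norm_num) (by simp [parityFrom])
      (by simp [parityFrom])
    intro e he
    simp only [parityFrom, Set.mem_insert_iff, Set.mem_ofPred_eq] at he ⊢
    omega
  · rw [h₃, h₂]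
    refine cardClass_two_pow_ssubset (n := 2) ?_ (by norm_num) (by simp [parityFrom])
      (by simp [parityFrom])
    intro e he
    simp only [parityFrom, Set.mem_ofPred_eq] at he ⊢
    omega
end
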